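/- For every simple transposition s_i = (i,i+1) and every w ∈ S_n: if ℓ(s_i w) < ℓ(w) then s_i · p_w = p_w − (t_i − t_{i+1}) p_{s_i w}, and if ℓ(s_i w) > ℓ(w) then s_i · p_w = p_w. -/

import Mathlib

/-!
Put `s = (x x+1)` and `α = t_x - t_{x+1}`. In both cases the difference `e` of the two sides lies
in `R`, is homogeneous of degree `ℓ(w)`, and is divisible by `α` at every point, since `α` divides
`f - s(f)` for every polynomial `f`. If `e` vanishes at all points shorter than `v`, then `e(v)` is
divisible by the `ℓ(v)` pairwise non-associated primes `t_a - t_b` with `ℓ((a b)v) < ℓ(v)`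
(these are the `(a, b)` with `v⁻¹ b < v⁻¹ a`). By degree, `e(v) = 0` as soon as `ℓ(v) > ℓ(w)`, and
also when `ℓ(v) = ℓ(w)`: then either `sv > v` and `α` is one more prime factor, or `sv < v` and
`α²` divides `e(v)`. At the points with `ℓ(v) < ℓ(w)` all terms vanish by the support conditions,
except at `v = sw` in the descent case, where one uses `p_w(w) = α · s(p_{sw}(sw))`.
-/

open MvPolynomial Equiv Finset

noncomputable section

/-- The polynomial ring ℂ[t₁,…,tₙ]. -/
abbrev Pol (n : ℕ) : Type := MvPolynomial (Fin n) ℂ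

/-- The action of a permutation `w` on polynomials by the substitution `tᵢ ↦ t_{w(i)}`. -/
def pact {n : ℕ} (w : Perm (Fin n)) (f : Pol n) : Pol n := rename ⇑w f

/-- The GKM condition defining `R ⊆ ∏_{v ∈ Sₙ} ℂ[t₁,…,tₙ]`: for every `v` and every
transposition `(i j)` with `i < j`, the difference `p(v) − p((i j)v)` is divisible by
`tᵢ − tⱼ`. -/
def GKM (n : ℕ) (p : Perm (Fin n) → Pol n) : Prop :=
  ∀ (v : Perm (Fin n)) (i j : Fin n), i < j →
    (X i - X j : Pol n) ∣ (p v - p (Equiv.swap i j * v))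

/-- The length of a permutation: its number of inversions. -/
def len {n : ℕ} (w : Perm (Fin n)) : ℕ :=
  (Finset.univ.filter fun q : Fin n × Fin n => q.1 < q.2 ∧ w q.2 < w q.1).card

/-- Bruhat order: the partial order generated by `u < (i j) u` whenever `ℓ(u) < ℓ((i j)u)`. -/
def bruhatLE {n : ℕ} : Perm (Fin n) → Perm (Fin n) → Prop :=
  Relation.ReflTransGen
    (fun u v => (∃ i j : Fin n, i < j ∧ v = Equiv.swap i j * u) ∧ len u < len v)

/-- `p` is the canonical class (equivariant Schubert class) of `w`:
(i) each component is homogeneous of degree `ℓ(w)`; (ii) `p(v) = 0` unless `v ≥ w` in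
Bruhat order; (iii) `p(w) = ∏ (tᵢ − tⱼ)` over pairs `i < j` with `ℓ((i j)w) < ℓ(w)`;
and `p` satisfies the GKM conditions. -/
def IsCanonical {n : ℕ} (w : Perm (Fin n)) (p : Perm (Fin n) → Pol n) : Prop :=
  GKM n p ∧
  (∀ v, (p v).IsHomogeneous (len w)) ∧
  (∀ v, ¬ bruhatLE w v → p v = 0) ∧
  p w = ∏ q ∈ Finset.univ.filter
      (fun q : Fin n × Fin n => q.1 < q.2 ∧ len (Equiv.swap q.1 q.2 * w) < len w),
      (X q.1 - X q.2 : Pol n)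

/-- The simple transposition `sᵢ = (i, i+1)`. -/
def sT (n i : ℕ) (h : i + 1 < n) : Perm (Fin n) :=
  Equiv.swap ⟨i, Nat.lt_of_succ_lt h⟩ ⟨i + 1, h⟩

/-- The dot (left) action: `(w·p)(v) = w(p(w⁻¹ v))`. -/
def dot {n : ℕ} (w : Perm (Fin n)) (p : Perm (Fin n) → Pol n) : Perm (Fin n) → Pol n :=
  fun v => pact w (p (w⁻¹ * v))

/-- The star (right) action: `(p * w)(v) = p(vw)`. -/
def starAct {n : ℕ} (p : Perm (Fin n) → Pol n) (w : Perm (Fin n)) :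
    Perm (Fin n) → Pol n :=
  fun v => p (v * w)

/-- `R` as a `ℂ[t₁,…,tₙ]`-submodule of the product. -/
def gkmSubmodule (n : ℕ) : Submodule (Pol n) (Perm (Fin n) → Pol n) where
  carrier := {p | GKM n p}
  add_mem' := by
    intro a b ha hb v i j hij
    have h := dvd_add (ha v i j hij) (hb v i j hij)
    simpa [Pi.add_apply, add_sub_add_comm] using h
  zero_mem' := by
    intro v i j hij
    simp
  smul_mem' := by
    intro c p hp v i j hij
    have h := (hp v i j hij).mul_left c
    simpa [Pi.smul_apply, smul_eq_mul, mul_sub] using h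

/-- The maximal ideal `𝔪 = (t₁,…,tₙ) ⊆ ℂ[t₁,…,tₙ]`. -/
def mIdeal (n : ℕ) : Ideal (Pol n) := Ideal.span (Set.range (X : Fin n → Pol n))

/-- The submodule `𝔪R`: finite sums of products `c • p` with `c ∈ 𝔪` and `p ∈ R`. -/
def mR (n : ℕ) : Submodule (Pol n) (Perm (Fin n) → Pol n) :=
  Submodule.span (Pol n) {q | ∃ c ∈ mIdeal n, ∃ p, GKM n p ∧ q = c • p}

section Length

variable {n : ℕ}

def inversions (w : Perm (Fin n)) : Finset (Fin n × Fin n) :=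
  univ.filter fun q => q.1 < q.2 ∧ w q.2 < w q.1

theorem mem_inversions {w : Perm (Fin n)} {q : Fin n × Fin n} :
    q ∈ inversions w ↔ q.1 < q.2 ∧ w q.2 < w q.1 := by
  simp [inversions]

theorem card_inversions (w : Perm (Fin n)) : (inversions w).card = len w := rfl

theorem len_inv (w : Perm (Fin n)) : len w⁻¹ = len w := by
  rw [← card_inversions, ← card_inversions]
  refine card_nbij' (fun q => (w⁻¹ q.2, w⁻¹ q.1)) (fun q => (w q.2, w q.1)) ?_ ?_ ?_ ?_ <;>
    intro q hq <;> simp_all [mem_inversions]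

theorem swap_lt_swap_iff_of_adjacent {x y a b : Fin n} (hxy : (y : ℕ) = x + 1)
    (hxy' : (a, b) ≠ (x, y)) (hyx : (a, b) ≠ (y, x)) : swap x y a < swap x y b ↔ a < b := by
  simp only [ne_eq, Prod.mk.injEq, Fin.ext_iff] at hxy' hyx
  simp only [swap_apply_def, Fin.lt_def]
  split_ifs <;> simp_all [Fin.ext_iff] <;> omega

theorem inversions_mul_swap_of_lt {u : Perm (Fin n)} {x y : Fin n} (hxy : (y : ℕ) = x + 1)
    (h : u x < u y) :
    inversions (u * swap x y) =
      insert (x, y) ((inversions u).map (prodCongr (swap x y) (swap x y)).toEmbedding) := by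
  ext ⟨a, b⟩
  simp only [mem_insert, mem_map_equiv, mem_inversions, prodCongr_symm, symm_swap,
    prodCongr_apply, Prod.map, Perm.mul_apply]
  have hlt : x < y := by rw [Fin.lt_def]; omega
  by_cases hab : (a, b) = (x, y)
  · obtain ⟨rfl, rfl⟩ := Prod.mk.inj hab
    simpa [hlt] using h
  by_cases hba : (a, b) = (y, x)
  · obtain ⟨rfl, rfl⟩ := Prod.mk.inj hba
    simp [hlt.not_gt, h.not_gt, hlt.ne]
  rw [swap_lt_swap_iff_of_adjacent hxy hab hba]
  simp [hab]

theorem pair_notMem_map_inversions {x y : Fin n} (hxy : x < y) (u : Perm (Fin n)) :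
    (x, y) ∉ (inversions u).map (prodCongr (swap x y) (swap x y)).toEmbedding := by
  simp [mem_map_equiv, mem_inversions, hxy.not_gt]

theorem len_mul_swap_of_lt {u : Perm (Fin n)} {x y : Fin n} (hxy : (y : ℕ) = x + 1)
    (h : u x < u y) : len (u * swap x y) = len u + 1 := by
  rw [← card_inversions, inversions_mul_swap_of_lt hxy h,
    card_insert_of_notMem (pair_notMem_map_inversions (by rw [Fin.lt_def]; omega) u), card_map,
    card_inversions]

theorem len_mul_swap_of_gt {u : Perm (Fin n)} {x y : Fin n} (hxy : (y : ℕ) = x + 1)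
    (h : u y < u x) : len u = len (u * swap x y) + 1 := by
  simpa using len_mul_swap_of_lt (u := u * swap x y) hxy (by simpa using h)

theorem len_mul_swap_of_adjacent {x y : Fin n} (u : Perm (Fin n)) (hxy : (y : ℕ) = x + 1) :
    len (u * swap x y) = len u + 1 ∨ len u = len (u * swap x y) + 1 := by
  rcases (u.injective.ne (a₁ := x) (a₂ := y) (by rw [Ne, Fin.ext_iff]; omega)).lt_or_gt with h | h
  · exact Or.inl (len_mul_swap_of_lt hxy h)
  · exact Or.inr (len_mul_swap_of_gt hxy h)

theorem len_mul_swap_lt {u : Perm (Fin n)} {a b : Fin n} (hab : a < b) (h : u b < u a) :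
    len (u * swap a b) < len u := by
  induction hk : (b : ℕ) - a using Nat.strong_induction_on generalizing u a b with
  | _ k ih =>
  rw [Fin.lt_def] at hab
  by_cases hadj : (b : ℕ) = a + 1
  · linarith [len_mul_swap_of_gt hadj h]
  set r : Fin n := ⟨b - 1, by omega⟩
  have hrb : (b : ℕ) = r + 1 := by simp [r]; omega
  have har : a < r := by rw [Fin.lt_def]; simp [r]; omega
  have hab' : a ≠ b := by rw [Ne, Fin.ext_iff]; omega
  have hrb' : r ≠ b := by rw [Ne, Fin.ext_iff]; omega
  have hconj : swap a b = swap r b * swap a r * swap r b := by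
    rw [swap_mul_swap_mul_swap har.ne hab', swap_comm]
  set u₁ := u * swap r b
  set u₂ := u₁ * swap a r
  have hu : u * swap a b = u₂ * swap r b := by simp only [hconj, u₂, u₁, mul_assoc]
  have hu₁a : u₁ a = u a := by simp [u₁, swap_apply_of_ne_of_ne har.ne hab']
  have hu₁r : u₁ r = u b := by simp [u₁]
  have hu₁₂ : len u₂ < len u₁ := ih (r - a) (by omega) har (by rwa [hu₁a, hu₁r]) rfl
  rw [hu]
  rcases (u.injective.ne hrb').lt_or_gt with hr | hr
  · have hu₂ : u₂ b < u₂ r := by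
      simp only [u₂, u₁, Perm.mul_apply, swap_apply_right,
        swap_apply_of_ne_of_ne hab'.symm hrb'.symm]
      simpa [swap_apply_of_ne_of_ne har.ne hab'] using hr.trans h
    linarith [len_mul_swap_of_lt hrb hr, len_mul_swap_of_gt hrb hu₂]
  · rcases len_mul_swap_of_adjacent u₂ hrb with h' | h' <;>
      linarith [len_mul_swap_of_gt hrb hr]

theorem len_mul_swap_lt_iff {u : Perm (Fin n)} {a b : Fin n} (hab : a < b) :
    len (u * swap a b) < len u ↔ u b < u a := by
  refine ⟨fun h => ?_, len_mul_swap_lt hab⟩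
  by_contra hba
  have hlt : u a < u b := (not_lt.1 hba).lt_of_ne (u.injective.ne hab.ne)
  have := len_mul_swap_lt (u := u * swap a b) hab (by simpa using hlt)
  rw [mul_swap_mul_self] at this
  omega

theorem len_swap_mul (a b : Fin n) (v : Perm (Fin n)) :
    len (swap a b * v) = len (v⁻¹ * swap a b) := by
  rw [← len_inv, mul_inv_rev, swap_inv]

theorem len_swap_mul_lt_iff {v : Perm (Fin n)} {a b : Fin n} (hab : a < b) :
    len (swap a b * v) < len v ↔ v⁻¹ b < v⁻¹ a := by
  rw [len_swap_mul, ← len_inv v, len_mul_swap_lt_iff hab]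

theorem len_swap_mul_of_adjacent {x y : Fin n} (v : Perm (Fin n)) (hxy : (y : ℕ) = x + 1) :
    len (swap x y * v) = len v + 1 ∨ len v = len (swap x y * v) + 1 := by
  rw [len_swap_mul, ← len_inv v]
  exact len_mul_swap_of_adjacent v⁻¹ hxy

def leftInversions (w : Perm (Fin n)) : Finset (Fin n × Fin n) :=
  univ.filter fun q => q.1 < q.2 ∧ len (swap q.1 q.2 * w) < len w

theorem mem_leftInversions {w : Perm (Fin n)} {q : Fin n × Fin n} :
    q ∈ leftInversions w ↔ q.1 < q.2 ∧ len (swap q.1 q.2 * w) < len w := by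
  simp [leftInversions]

theorem leftInversions_eq_inversions_inv (w : Perm (Fin n)) :
    leftInversions w = inversions w⁻¹ := by
  ext q
  rw [mem_leftInversions, mem_inversions]
  exact and_congr_right len_swap_mul_lt_iff

theorem card_leftInversions (w : Perm (Fin n)) : (leftInversions w).card = len w := by
  rw [leftInversions_eq_inversions_inv, card_inversions, len_inv]

end Length

section Polynomial

variable {σ R : Type*} [CommRing R]

theorem eq_zero_of_isHomogeneous_of_dvd [IsDomain R] {P f : MvPolynomial σ R} {N m : ℕ}
    (hP : P.IsHomogeneous N) (hf : f.IsHomogeneous m) (hmN : m < N) (hPf : P ∣ f) : f = 0 := by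
  obtain ⟨g, rfl⟩ := hPf
  by_contra hPg
  obtain ⟨hP0, hg0⟩ := mul_ne_zero_iff.1 hPg
  have := totalDegree_mul_of_isDomain hP0 hg0
  rw [hf.totalDegree hPg, hP.totalDegree hP0] at this
  omega

theorem X_sub_X_ne_zero [Nontrivial R] {a b : σ} (hab : a ≠ b) :
    (X a - X b : MvPolynomial σ R) ≠ 0 :=
  sub_ne_zero.2 fun h => hab (X_injective h)

theorem isHomogeneous_X_sub_X (a b : σ) : (X a - X b : MvPolynomial σ R).IsHomogeneous 1 :=
  (isHomogeneous_X R a).sub (isHomogeneous_X R b)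

theorem prime_X_sub_X [IsDomain R] [UniqueFactorizationMonoid R] {a b : σ} (hab : a ≠ b) :
    Prime (X a - X b : MvPolynomial σ R) := by
  classical
  refine UniqueFactorizationMonoid.irreducible_iff_prime.1
    (irreducible_of_totalDegree_eq_one ?_ fun r hr => ?_)
  · exact (isHomogeneous_X_sub_X a b).totalDegree (X_sub_X_ne_zero hab)
  · exact isUnit_of_dvd_one <| by
      simpa [coeff_X, Finsupp.single_left_inj one_ne_zero, hab.symm] using hr (Finsupp.single a 1)

theorem mem_of_X_sub_X_dvd_X_sub_X [Nontrivial R] {a b c d : σ} (hcd : c ≠ d)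
    (h : (X a - X b : MvPolynomial σ R) ∣ X c - X d) : c = a ∨ c = b := by
  classical
  by_contra! hc
  obtain ⟨g, hg⟩ := h
  have := congrArg (eval (Pi.single c 1)) hg
  simp [hc.1.symm, hc.2.symm, hcd.symm] at this

theorem eq_of_X_sub_X_dvd_X_sub_X [LinearOrder σ] [Nontrivial R] {a b c d : σ} (hab : a < b)
    (hcd : c < d) (h : (X a - X b : MvPolynomial σ R) ∣ X c - X d) : (a, b) = (c, d) := by
  have hd : d = a ∨ d = b :=
    mem_of_X_sub_X_dvd_X_sub_X hcd.ne' (by simpa using h.neg_right)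
  rcases mem_of_X_sub_X_dvd_X_sub_X hcd.ne h with rfl | rfl <;> rcases hd with rfl | rfl
  all_goals first | rfl | (exfalso; order)

theorem X_sub_X_dvd_sub_rename_swap [DecidableEq σ] (a b : σ) (f : MvPolynomial σ R) :
    (X a - X b : MvPolynomial σ R) ∣ f - rename (swap a b) f := by
  induction f using MvPolynomial.induction_on with
  | C r => simp
  | add f g hf hg => simpa [add_sub_add_comm] using dvd_add hf hg
  | mul_X f c hf =>
    -- `f X_c - s(f) X_{s c} = (f - s f) X_c + s(f) (X_c - X_{s c})`
    have hc : (X a - X b : MvPolynomial σ R) ∣ X c - X (swap a b c) := by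
      rcases eq_or_ne c a with rfl | hca
      · rw [swap_apply_left]
      rcases eq_or_ne c b with rfl | hcb
      · rw [swap_apply_right, ← neg_dvd, neg_sub]
      · rw [swap_apply_of_ne_of_ne hca hcb, sub_self]
        exact dvd_zero _
    have := dvd_add (hf.mul_right (X c)) (hc.mul_left (rename (swap a b) f))
    simpa [mul_sub, sub_mul] using this

theorem mul_prod_dvd_of_prime {M ι : Type*} [CommMonoidWithZero M] [DecidableEq ι] {g f : M}
    {p : ι → M} {s : Finset ι} (hgf : g ∣ f) (hp : ∀ i ∈ s, Prime (p i))
    (hpf : ∀ i ∈ s, p i ∣ f) (hpg : ∀ i ∈ s, ¬ p i ∣ g)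
    (hpp : ∀ i ∈ s, ∀ j ∈ s, i ≠ j → ¬ p i ∣ p j) : g * ∏ i ∈ s, p i ∣ f := by
  induction s using Finset.induction_on with
  | empty => simpa using hgf
  | insert i s hi ih =>
    have hi' := mem_insert_self i s
    have hsub : ∀ j ∈ s, j ∈ insert i s := fun j => mem_insert_of_mem
    obtain ⟨k, hk⟩ := ih (fun j hj => hp j (hsub j hj)) (fun j hj => hpf j (hsub j hj))
      (fun j hj => hpg j (hsub j hj)) (fun j hj l hl => hpp j (hsub j hj) l (hsub l hl))
    have hpi : ¬ p i ∣ g * ∏ j ∈ s, p j := by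
      rw [(hp i hi').dvd_mul, (hp i hi').dvd_finsetProd_iff]
      push Not
      exact ⟨hpg i hi', fun j hj => hpp i hi' j (hsub j hj) (by rintro rfl; exact hi hj)⟩
    have hpk : p i ∣ k := ((hp i hi').dvd_mul.1 (hk ▸ hpf i hi')).resolve_left hpi
    rw [prod_insert hi, hk, mul_left_comm, mul_comm (p i)]
    exact mul_dvd_mul_left _ hpk

end Polynomial

section Schubert

variable {n : ℕ}

theorem bruhatLE.eq_or_len_lt {u v : Perm (Fin n)} (h : bruhatLE u v) : u = v ∨ len u < len v := by
  induction h with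
  | refl => exact Or.inl rfl
  | tail _ hstep ih => exact Or.inr (ih.elim (· ▸ hstep.2) (·.trans hstep.2))

theorem IsCanonical.apply_eq_zero {w v : Perm (Fin n)} {p : Perm (Fin n) → Pol n}
    (hp : IsCanonical w p) (hvw : v ≠ w) (hlen : len v ≤ len w) : p v = 0 :=
  hp.2.2.1 v fun h => (h.eq_or_len_lt).elim (fun h => hvw h.symm) fun h => by omega

def rootProd (w : Perm (Fin n)) : Pol n := ∏ q ∈ leftInversions w, (X q.1 - X q.2 : Pol n)

theorem IsCanonical.apply_self {w : Perm (Fin n)} {p : Perm (Fin n) → Pol n}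
    (hp : IsCanonical w p) : p w = rootProd w :=
  hp.2.2.2

theorem rootProd_eq_mul_pact {w : Perm (Fin n)} {x y : Fin n} (hxy : (y : ℕ) = x + 1)
    (h : len (swap x y * w) < len w) :
    rootProd w = (X x - X y) * pact (swap x y) (rootProd (swap x y * w)) := by
  have hlt : x < y := by rw [Fin.lt_def]; omega
  have hw : w⁻¹ = (swap x y * w)⁻¹ * swap x y := by simp [mul_assoc]
  have hdesc : (swap x y * w)⁻¹ x < (swap x y * w)⁻¹ y := by
    simpa using (len_swap_mul_lt_iff hlt).1 h
  rw [rootProd, rootProd, leftInversions_eq_inversions_inv, leftInversions_eq_inversions_inv, hw,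
    inversions_mul_swap_of_lt hxy hdesc, prod_insert (pair_notMem_map_inversions hlt _), prod_map,
    pact, map_prod]
  simp

theorem pact_mul (w : Perm (Fin n)) (f g : Pol n) : pact w (f * g) = pact w f * pact w g :=
  map_mul _ f g

theorem pact_swap_pact_swap (a b : Fin n) (f : Pol n) :
    pact (swap a b) (pact (swap a b) f) = f := by
  simp [pact, rename_rename, Function.comp_def, ← Function.id_def]

theorem pact_swap_X_sub_X (a b : Fin n) :
    pact (swap a b) (X a - X b : Pol n) = -(X a - X b) := by
  simp [pact]

theorem GKM.dvd_sub_swap_mul {p : Perm (Fin n) → Pol n} (hp : GKM n p) {i j : Fin n}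
    (hij : i ≠ j) (v : Perm (Fin n)) : (X i - X j : Pol n) ∣ p v - p (swap i j * v) := by
  rcases hij.lt_or_gt with h | h
  · exact hp v i j h
  · simpa [swap_comm] using (hp v j i h).neg_left

theorem gkm_dot {p : Perm (Fin n) → Pol n} (hp : GKM n p) (w : Perm (Fin n)) :
    GKM n (dot w p) := by
  intro v i j hij
  have h := map_dvd (rename w) (hp.dvd_sub_swap_mul (w⁻¹.injective.ne hij.ne) (w⁻¹ * v))
  rw [swap_apply_apply, inv_inv, mul_assoc, mul_inv_cancel_left, mul_assoc] at h
  simpa [dot, pact, mul_assoc] using h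

theorem isHomogeneous_dot {p : Perm (Fin n) → Pol n} {m : ℕ}
    (hp : ∀ v, (p v).IsHomogeneous m) (w v : Perm (Fin n)) : (dot w p v).IsHomogeneous m :=
  (hp _).rename_isHomogeneous

theorem GKM.dvd_dot_swap_sub {p : Perm (Fin n) → Pol n} (hp : GKM n p) {a b : Fin n}
    (hab : a ≠ b) (v : Perm (Fin n)) :
    (X a - X b : Pol n) ∣ dot (swap a b) p v - p v := by
  have h := dvd_add (X_sub_X_dvd_sub_rename_swap a b (p (swap a b * v)))
    (hp.dvd_sub_swap_mul hab v)
  rw [← dvd_neg]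
  simpa [dot, pact] using h

end Schubert

section Vanishing

variable {n : ℕ} {e : Perm (Fin n) → Pol n} {v : Perm (Fin n)}

theorem isHomogeneous_prod_X_sub_X (S : Finset (Fin n × Fin n)) :
    (∏ q ∈ S, (X q.1 - X q.2 : Pol n)).IsHomogeneous S.card := by
  simpa using IsHomogeneous.prod S _ (fun _ => 1) fun q _ => isHomogeneous_X_sub_X q.1 q.2

theorem GKM.X_sub_X_dvd_of_vanish_below (he : GKM n e)
    (hbelow : ∀ u, len u < len v → e u = 0) {q : Fin n × Fin n} (hq : q ∈ leftInversions v) :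
    (X q.1 - X q.2 : Pol n) ∣ e v := by
  rw [mem_leftInversions] at hq
  simpa [hbelow _ hq.2] using he v q.1 q.2 hq.1

theorem GKM.apply_eq_zero_of_dvd (he : GKM n e) (hbelow : ∀ u, len u < len v → e u = 0)
    {m d : ℕ} (hev : (e v).IsHomogeneous m) {g : Pol n} (hg : g.IsHomogeneous d) (hgv : g ∣ e v)
    {S : Finset (Fin n × Fin n)} (hS : S ⊆ leftInversions v)
    (hSg : ∀ q ∈ S, ¬ (X q.1 - X q.2 : Pol n) ∣ g) (hdeg : m < d + S.card) : e v = 0 := by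
  have hlt : ∀ q ∈ S, q.1 < q.2 := fun q hq => (mem_leftInversions.1 (hS hq)).1
  refine eq_zero_of_isHomogeneous_of_dvd (hg.mul (isHomogeneous_prod_X_sub_X S)) hev hdeg
    (mul_prod_dvd_of_prime hgv (fun q hq => prime_X_sub_X (hlt q hq).ne)
      (fun q hq => he.X_sub_X_dvd_of_vanish_below hbelow (hS hq)) hSg fun q hq r hr hqr h => ?_)
  exact hqr (eq_of_X_sub_X_dvd_X_sub_X (hlt q hq) (hlt r hr) h)

theorem GKM.eq_zero_of_forall_len_le (he : GKM n e) {m : ℕ}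
    (hhom : ∀ v, (e v).IsHomogeneous m)
    (H : ∀ v, len v ≤ m → (∀ u, len u < len v → e u = 0) → e v = 0) : e = 0 := by
  funext v
  induction hk : len v using Nat.strong_induction_on generalizing v with
  | _ k ih =>
  have hbelow : ∀ u, len u < len v → e u = 0 := fun u hu => ih _ (hk ▸ hu) u rfl
  by_cases hv : len v ≤ m
  · exact H v hv hbelow
  · exact he.apply_eq_zero_of_dvd hbelow (hhom v) (isHomogeneous_one _ _) (one_dvd _) subset_rfl
      (fun q hq h => (prime_X_sub_X (mem_leftInversions.1 hq).1.ne).not_dvd_one h)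
      (by rw [card_leftInversions]; omega)

theorem GKM.apply_eq_zero_of_len_lt_len_swap_mul (he : GKM n e)
    (hbelow : ∀ u, len u < len v → e u = 0) (hev : (e v).IsHomogeneous (len v)) {x y : Fin n}
    (hxy : x < y) (hdvd : (X x - X y : Pol n) ∣ e v) (hv : len v < len (swap x y * v)) :
    e v = 0 := by
  refine he.apply_eq_zero_of_dvd hbelow hev (isHomogeneous_X_sub_X x y) hdvd subset_rfl
    (fun ⟨a, b⟩ hab h => ?_) (by rw [card_leftInversions]; omega)
  obtain ⟨hab, hlen⟩ := mem_leftInversions.1 hab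
  obtain ⟨rfl, rfl⟩ := Prod.mk.inj (eq_of_X_sub_X_dvd_X_sub_X hab hxy h)
  omega

theorem GKM.apply_eq_zero_of_len_swap_mul_lt (he : GKM n e)
    (hbelow : ∀ u, len u < len v → e u = 0) (hev : (e v).IsHomogeneous (len v)) {x y : Fin n}
    (hxy : x < y) (hdvd : (X x - X y : Pol n) ^ 2 ∣ e v) (hv : len (swap x y * v) < len v) :
    e v = 0 := by
  have hxyv : (x, y) ∈ leftInversions v := mem_leftInversions.2 ⟨hxy, hv⟩
  refine he.apply_eq_zero_of_dvd hbelow hev ((isHomogeneous_X_sub_X x y).pow 2) hdvd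
    (erase_subset (x, y) _) (fun q hq h => ?_) ?_
  · obtain ⟨hqxy, hq⟩ := mem_erase.1 hq
    have hprime := prime_X_sub_X (R := ℂ) (mem_leftInversions.1 hq).1.ne
    exact hqxy (eq_of_X_sub_X_dvd_X_sub_X (mem_leftInversions.1 hq).1 hxy
      (hprime.dvd_of_dvd_pow h))
  · rw [card_erase_of_mem hxyv, card_leftInversions]
    have := card_pos.2 ⟨_, hxyv⟩
    rw [card_leftInversions] at this
    omega

end Vanishing

section DotAction

variable {n : ℕ} {w : Perm (Fin n)} {p : Perm (Fin n) → Pol n} {x y : Fin n}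

theorem dot_swap_apply (p : Perm (Fin n) → Pol n) (v : Perm (Fin n)) :
    dot (swap x y) p v = pact (swap x y) (p (swap x y * v)) := by
  rw [dot, swap_inv]

theorem IsCanonical.dot_swap_of_len_lt_len_swap_mul (hp : IsCanonical w p)
    (hxy : (y : ℕ) = x + 1) (hw : len w < len (swap x y * w)) : dot (swap x y) p = p := by
  have hlt : x < y := by rw [Fin.lt_def]; omega
  have he : GKM n (dot (swap x y) p - p) := (gkmSubmodule n).sub_mem (gkm_dot hp.1 _) hp.1
  have hhom v : ((dot (swap x y) p - p) v).IsHomogeneous (len w) :=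
    (isHomogeneous_dot hp.2.1 _ v).sub (hp.2.1 v)
  rw [← sub_eq_zero]
  refine he.eq_zero_of_forall_len_le hhom fun v hv hbelow => ?_
  by_cases hasc : len v = len w ∧ len v < len (swap x y * v)
  · exact he.apply_eq_zero_of_len_lt_len_swap_mul hbelow (hasc.1 ▸ hhom v) hlt
      (hp.1.dvd_dot_swap_sub hlt.ne v) hasc.2
  have hvw : v ≠ w := by rintro rfl; exact hasc ⟨rfl, hw⟩
  have hsvw : swap x y * v ≠ w := by rintro rfl; rw [swap_mul_self_mul] at hw; omega
  have hsv : len (swap x y * v) ≤ len w := by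
    rcases len_swap_mul_of_adjacent v hxy with h | h <;> omega
  simp [dot_swap_apply, pact, hp.apply_eq_zero hvw hv, hp.apply_eq_zero hsvw hsv]

theorem IsCanonical.apply_eq_mul_pact_of_len_swap_mul_lt {p' : Perm (Fin n) → Pol n}
    (hp : IsCanonical w p) (hp' : IsCanonical (swap x y * w) p') (hxy : (y : ℕ) = x + 1)
    (hw : len (swap x y * w) < len w) {v : Perm (Fin n)} (hv : len v = len w)
    (hsv : len (swap x y * v) < len v) :
    p v = (X x - X y) * pact (swap x y) (p' (swap x y * v)) := by
  by_cases hvw : v = w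
  · rw [hvw, hp.apply_self, hp'.apply_self]
    exact rootProd_eq_mul_pact hxy hw
  have hsvu : swap x y * v ≠ swap x y * w := fun h => hvw (mul_left_cancel h)
  have hsv' : len (swap x y * v) ≤ len (swap x y * w) := by
    rcases len_swap_mul_of_adjacent w hxy with h | h <;> omega
  rw [hp.apply_eq_zero hvw hv.le, hp'.apply_eq_zero hsvu hsv', pact, map_zero, mul_zero]

theorem IsCanonical.dot_swap_of_len_swap_mul_lt {p' : Perm (Fin n) → Pol n}
    (hp : IsCanonical w p) (hp' : IsCanonical (swap x y * w) p') (hxy : (y : ℕ) = x + 1)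
    (hw : len (swap x y * w) < len w) : dot (swap x y) p = p - (X x - X y : Pol n) • p' := by
  have hlt : x < y := by rw [Fin.lt_def]; omega
  have hu : len w = len (swap x y * w) + 1 := by
    rcases len_swap_mul_of_adjacent w hxy with h | h <;> omega
  have he : GKM n (dot (swap x y) p - (p - (X x - X y : Pol n) • p')) :=
    (gkmSubmodule n).sub_mem (gkm_dot hp.1 _) ((gkmSubmodule n).sub_mem hp.1
      ((gkmSubmodule n).smul_mem _ hp'.1))
  have he_apply v : (dot (swap x y) p - (p - (X x - X y : Pol n) • p')) v =
      pact (swap x y) (p (swap x y * v)) - p v + (X x - X y) * p' v := by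
    simp only [Pi.sub_apply, Pi.smul_apply, smul_eq_mul, dot_swap_apply]
    ring
  have hhom v :
      ((dot (swap x y) p - (p - (X x - X y : Pol n) • p')) v).IsHomogeneous (len w) := by
    refine ((isHomogeneous_dot hp.2.1 _ v).sub ((hp.2.1 v).sub ?_))
    simpa [hu, add_comm] using (isHomogeneous_X_sub_X x y).mul (hp'.2.1 v)
  rw [← sub_eq_zero]
  refine he.eq_zero_of_forall_len_le hhom fun v hv hbelow => ?_
  rcases hv.lt_or_eq with hv | hv
  · rw [he_apply, hp.apply_eq_zero (v := v) (by rintro rfl; omega) hv.le]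
    by_cases hvu : v = swap x y * w
    · rw [hvu, swap_mul_self_mul, hp.apply_self, hp'.apply_self, rootProd_eq_mul_pact hxy hw,
        pact_mul, pact_swap_pact_swap, pact_swap_X_sub_X]
      ring
    have hsvw : swap x y * v ≠ w := by rintro rfl; exact hvu (swap_mul_self_mul _ _ _).symm
    have hsv : len (swap x y * v) ≤ len w := by
      rcases len_swap_mul_of_adjacent v hxy with h | h <;> omega
    simp [pact, hp.apply_eq_zero hsvw hsv, hp'.apply_eq_zero hvu (by omega)]
  rcases len_swap_mul_of_adjacent v hxy with hsv | hsv
  · refine he.apply_eq_zero_of_len_lt_len_swap_mul hbelow (hv ▸ hhom v) hlt ?_ (by omega)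
    rw [he_apply]
    exact dvd_add (hp.1.dvd_dot_swap_sub hlt.ne v) (dvd_mul_right _ _)
  refine he.apply_eq_zero_of_len_swap_mul_lt hbelow (hv ▸ hhom v) hlt ?_ (by omega)
  have hpv := hp.apply_eq_mul_pact_of_len_swap_mul_lt hp' hxy hw hv (by omega)
  have hpsv : p (swap x y * v) = 0 := hp.apply_eq_zero (by rintro h; rw [h] at hsv; omega) (by omega)
  have hdvd := hp'.1.dvd_dot_swap_sub hlt.ne v
  rw [dot_swap_apply] at hdvd
  rw [he_apply, hpv, hpsv, pact, map_zero, pow_two]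
  convert mul_dvd_mul_left (X x - X y) hdvd.neg_right using 1
  ring

end DotAction

/-- the dot action of a simple transposition on a Schubert class:
if `ℓ(sᵢw) < ℓ(w)` then `sᵢ · p_w = p_w − (tᵢ − tᵢ₊₁) p_{sᵢw}`, and if
`ℓ(sᵢw) > ℓ(w)` then `sᵢ · p_w = p_w`. -/
theorem dot_action_on_schubert_class (n : ℕ)
    (pw : Perm (Fin n) → Perm (Fin n) → Pol n)
    (hpw : ∀ w, IsCanonical w (pw w))
    (w : Perm (Fin n)) (i : ℕ) (hi : i + 1 < n) :
    (len (sT n i hi * w) < len w →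
      dot (sT n i hi) (pw w)
        = pw w - (X ⟨i, by omega⟩ - X ⟨i + 1, hi⟩ : Pol n) • pw (sT n i hi * w)) ∧
    (len w < len (sT n i hi * w) → dot (sT n i hi) (pw w) = pw w) :=
  ⟨(hpw w).dot_swap_of_len_swap_mul_lt (hpw _) rfl, (hpw w).dot_swap_of_len_lt_len_swap_mul rfl⟩
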